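/- arXiv:math/0505007 — 4 statements merged into one kernel-verified Lean document; each statement's English description precedes it below -/
import Mathlib

section
/- Let K be a totally real number field with a distinguished embedding into ℝ, and D = (a,b)_K a quaternion algebra with a, b in K such that σ(a) < 0 and σ(b) < 0 for every embedding σ : K → ℝ other than the distinguished one. If x = x₀ + x₁ i + x₂ j + x₃ ij has reduced norm 1 (i.e. x₀² - a x₁² - b x₂² + a b x₃² = 1) and x ≠ ±1, then |σ(x₀)| < 1 for every non-distinguished embedding σ; equivalently, writing x₀ = 1 + y₀, one has -2 < σ(y₀) < 0. -/
open Quaternion QuaternionAlgebra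

/-- Let `K` be a (totally real) number field with a distinguished real
embedding, and `D = (a,b)_K` a quaternion algebra such that `σ(a) < 0` and `σ(b) < 0` for a
non-distinguished real embedding `σ : K → ℝ`.  If `x = x₀ + x₁ i + x₂ j + x₃ ij` has reduced
norm `1`, i.e. `x₀² - a x₁² - b x₂² + a b x₃² = 1`, and `x ≠ ±1`, then `|σ(x₀)| < 1`;
equivalently, writing `x₀ = 1 + y₀`, one has `-2 < σ(y₀) < 0`. -/
theorem abs_conjugate_re_lt_one_of_norm_one
    (K : Type*) [Field K] (a b : K) (σ : K →+* ℝ)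
    (hσa : σ a < 0) (hσb : σ b < 0)
    (x : ℍ[K, a, b])
    (hnorm : x.re ^ 2 - a * x.imI ^ 2 - b * x.imJ ^ 2 + a * b * x.imK ^ 2 = 1)
    (hx1 : x ≠ 1) (hx2 : x ≠ -1) :
    |σ x.re| < 1 ∧ -2 < σ (x.re - 1) ∧ σ (x.re - 1) < 0 := by
  have hσnorm : σ x.re ^ 2 - σ a * σ x.imI ^ 2 - σ b * σ x.imJ ^ 2
      + σ a * σ b * σ x.imK ^ 2 = 1 := by
    have := congrArg σ hnorm
    simpa [map_sub, map_add, map_mul, map_pow] using this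
  have h1 : 0 ≤ - σ a * σ x.imI ^ 2 := mul_nonneg (by linarith) (sq_nonneg _)
  have h2 : 0 ≤ - σ b * σ x.imJ ^ 2 := mul_nonneg (by linarith) (sq_nonneg _)
  have h3 : 0 ≤ σ a * σ b * σ x.imK ^ 2 :=
    mul_nonneg (mul_pos_of_neg_of_neg hσa hσb).le (sq_nonneg _)
  have hle : σ x.re ^ 2 ≤ 1 := by nlinarith
  have hlt : σ x.re ^ 2 < 1 := by
    rcases lt_or_eq_of_le hle with h | h
    · exact h
    · exfalso
      have eI : σ a * σ x.imI ^ 2 = 0 := by linarith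
      have eJ : σ b * σ x.imJ ^ 2 = 0 := by linarith
      have eK : σ a * σ b * σ x.imK ^ 2 = 0 := by linarith
      have hI : σ x.imI = 0 := by
        rcases mul_eq_zero.mp eI with h' | h'
        · exact absurd h' hσa.ne
        · exact pow_eq_zero_iff (n := 2) (by norm_num) |>.mp h'
      have hJ : σ x.imJ = 0 := by
        rcases mul_eq_zero.mp eJ with h' | h'
        · exact absurd h' hσb.ne
        · exact pow_eq_zero_iff (n := 2) (by norm_num) |>.mp h'
      have hK : σ x.imK = 0 := by
        rcases mul_eq_zero.mp eK with h' | h'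
        · exact absurd h' (mul_pos_of_neg_of_neg hσa hσb).ne'
        · exact pow_eq_zero_iff (n := 2) (by norm_num) |>.mp h'
      have hI' : x.imI = 0 := σ.injective (by simpa using hI)
      have hJ' : x.imJ = 0 := σ.injective (by simpa using hJ)
      have hK' : x.imK = 0 := σ.injective (by simpa using hK)
      rw [hI', hJ', hK'] at hnorm
      have hre : (x.re - 1) * (x.re + 1) = 0 := by linear_combination hnorm
      rcases mul_eq_zero.mp hre with h0 | h0
      · exact hx1 (QuaternionAlgebra.ext (by simpa [sub_eq_zero] using h0) hI' hJ' hK')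
      · refine hx2 (QuaternionAlgebra.ext ?_ ?_ ?_ ?_) <;>
          simp [hI', hJ', hK', eq_neg_of_add_eq_zero_left h0]
  have habs : |σ x.re| < 1 := abs_lt_of_sq_lt_sq (by simpa using hlt) one_pos.le
  rcases abs_lt.mp habs with ⟨hl, hr⟩
  refine ⟨habs, ?_, ?_⟩ <;> simp [map_sub, map_one] <;> linarith
end

section
/- Let O_K be the ring of integers of a number field K (a Dedekind domain), I an ideal of O_K, and κ a nonzero element of O_K. Then the fractional ideal intersection (1/κ)I ∩ (1/2)I² equals (⟨2⟩ + κ I)^{-1} I², i.e. any y ∈ K with κ y ∈ I and 2 y ∈ I² lies in (⟨2⟩ + κ I)^{-1} I². -/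
open NumberField FractionalIdeal
open scoped nonZeroDivisors

private theorem myMemInf {R : Type*} [CommRing R] {K : Type*} [Field K] [Algebra R K]
    {A B : FractionalIdeal R⁰ K} {x : K} : x ∈ A ⊓ B ↔ x ∈ A ∧ x ∈ B := by
  rw [← mem_coe, coe_inf, Submodule.mem_inf, mem_coe, mem_coe]

private theorem myCoeIdealInf {R : Type*} [CommRing R] [IsDomain R] {K : Type*} [Field K]
    [Algebra R K] [IsFractionRing R K] (I J : Ideal R) :
    ((I ⊓ J : Ideal R) : FractionalIdeal R⁰ K) = (I : FractionalIdeal R⁰ K) ⊓ J := by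
  apply le_antisymm
  · exact le_inf ((coeIdeal_le_coeIdeal _).mpr inf_le_left)
      ((coeIdeal_le_coeIdeal _).mpr inf_le_right)
  · intro x hx
    obtain ⟨hx1, hx2⟩ := myMemInf.mp hx
    obtain ⟨a, ha, rfl⟩ := (mem_coeIdeal _).mp hx1
    obtain ⟨b, hb, hab⟩ := (mem_coeIdeal _).mp hx2
    have : b = a := IsFractionRing.injective R K hab
    exact (mem_coeIdeal _).mpr ⟨a, ⟨ha, this ▸ hb⟩, rfl⟩

private theorem mySingMulInf {R : Type*} [CommRing R] [IsDomain R] {K : Type*} [Field K]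
    [Algebra R K] [IsFractionRing R K]
    (c : K) (hc : c ≠ 0) (A B : FractionalIdeal R⁰ K) :
    spanSingleton R⁰ c * (A ⊓ B) = spanSingleton R⁰ c * A ⊓ spanSingleton R⁰ c * B := by
  apply le_antisymm
  · exact le_inf (mul_le_mul_right inf_le_left _)
      (mul_le_mul_right inf_le_right _)
  · intro x hx
    obtain ⟨hx1, hx2⟩ := myMemInf.mp hx
    obtain ⟨a, ha, rfl⟩ := mem_singleton_mul.mp hx1
    obtain ⟨b, hb, hab⟩ := mem_singleton_mul.mp hx2
    have : a = b := mul_left_cancel₀ hc hab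
    exact mem_singleton_mul.mpr ⟨a, myMemInf.mpr ⟨ha, this ▸ hb⟩, rfl⟩

/-- Let `O_K` be the ring of integers of a number field `K`, `I` an ideal of
`O_K`, and `κ ≠ 0` in `O_K`.  Then the fractional ideal `(1/κ)I ∩ (1/2)I²` equals
`(⟨2⟩ + κI)⁻¹ I²`; in particular any `y ∈ K` with `κ·y ∈ I` and `2·y ∈ I²` lies in
`(⟨2⟩ + κI)⁻¹ I²`. -/
theorem inv_kappa_I_inter_half_I_sq
    (K : Type*) [Field K] [NumberField K]
    (I : Ideal (𝓞 K)) (κ : 𝓞 K) (hκ : κ ≠ 0) :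
    (spanSingleton (𝓞 K)⁰ ((algebraMap (𝓞 K) K κ)⁻¹) * (I : FractionalIdeal (𝓞 K)⁰ K)) ⊓
        (spanSingleton (𝓞 K)⁰ ((2 : K)⁻¹) * ((I ^ 2 : Ideal (𝓞 K)) : FractionalIdeal (𝓞 K)⁰ K))
      = ((Ideal.span {(2 : 𝓞 K)} + Ideal.span {κ} * I : Ideal (𝓞 K)) :
          FractionalIdeal (𝓞 K)⁰ K)⁻¹ *
        ((I ^ 2 : Ideal (𝓞 K)) : FractionalIdeal (𝓞 K)⁰ K) ∧
    ∀ y : K, algebraMap (𝓞 K) K κ * y ∈ (I : FractionalIdeal (𝓞 K)⁰ K) →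
      2 * y ∈ ((I ^ 2 : Ideal (𝓞 K)) : FractionalIdeal (𝓞 K)⁰ K) →
      y ∈ ((Ideal.span {(2 : 𝓞 K)} + Ideal.span {κ} * I : Ideal (𝓞 K)) :
          FractionalIdeal (𝓞 K)⁰ K)⁻¹ *
        ((I ^ 2 : Ideal (𝓞 K)) : FractionalIdeal (𝓞 K)⁰ K) := by
  set κK : K := algebraMap (𝓞 K) K κ with hκKdef
  have hκK : κK ≠ 0 :=
    (map_ne_zero_iff _ (IsFractionRing.injective (𝓞 K) K)).mpr hκ
  have h2K : (2 : K) ≠ 0 := two_ne_zero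
  have h2R : (2 : 𝓞 K) ≠ 0 := two_ne_zero
  have h2map : (algebraMap (𝓞 K) K (2 : 𝓞 K)) = (2 : K) := map_ofNat _ 2
  have main : (spanSingleton (𝓞 K)⁰ (κK⁻¹) * (I : FractionalIdeal (𝓞 K)⁰ K)) ⊓
      (spanSingleton (𝓞 K)⁰ ((2 : K)⁻¹) * ((I ^ 2 : Ideal (𝓞 K)) : FractionalIdeal (𝓞 K)⁰ K))
      = ((Ideal.span {(2 : 𝓞 K)} + Ideal.span {κ} * I : Ideal (𝓞 K)) :
          FractionalIdeal (𝓞 K)⁰ K)⁻¹ *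
        ((I ^ 2 : Ideal (𝓞 K)) : FractionalIdeal (𝓞 K)⁰ K) := by
    by_cases hI : I = 0
    · subst hI
      simp [pow_two]
    · have hIF : (I : FractionalIdeal (𝓞 K)⁰ K) ≠ 0 := by
        simpa [coeIdeal_eq_zero] using hI
      set J : Ideal (𝓞 K) := Ideal.span {(2 : 𝓞 K)} + Ideal.span {κ} * I with hJdef
      have hJ0 : J ≠ 0 := by
        intro h
        have h2J : (2 : 𝓞 K) ∈ J := by
          rw [hJdef]
          exact Submodule.mem_sup_left (Ideal.mem_span_singleton_self _)
        rw [h] at h2J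
        exact h2R (by simpa using h2J)
      have hJF : (J : FractionalIdeal (𝓞 K)⁰ K) ≠ 0 := by
        simpa [coeIdeal_eq_zero] using hJ0
      set M : Ideal (𝓞 K) := (Ideal.span {(2 : 𝓞 K)} * I) ⊓ (Ideal.span {κ} * I ^ 2) with hMdef
      have hsup : (Ideal.span {(2 : 𝓞 K)} * I) ⊔ (Ideal.span {κ} * I ^ 2) = J * I := by
        rw [← Submodule.add_eq_sup, hJdef]
        ring
      have hid : (J * I) * M = (Ideal.span {(2 : 𝓞 K)} * I) * (Ideal.span {κ} * I ^ 2) := by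
        rw [← hsup, hMdef, Ideal.sup_mul_inf]
      have hidF : ((J : FractionalIdeal (𝓞 K)⁰ K) * (I : FractionalIdeal (𝓞 K)⁰ K)) *
          (M : FractionalIdeal (𝓞 K)⁰ K)
          = (spanSingleton (𝓞 K)⁰ (2 : K) * (I : FractionalIdeal (𝓞 K)⁰ K)) *
            (spanSingleton (𝓞 K)⁰ κK * ((I : FractionalIdeal (𝓞 K)⁰ K)) ^ 2) := by
        have := congrArg (fun (N : Ideal (𝓞 K)) => (N : FractionalIdeal (𝓞 K)⁰ K)) hid
        simpa only [coeIdeal_mul, coeIdeal_pow, coeIdeal_span_singleton, h2map, ← hκKdef]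
          using this
      have hMF : (M : FractionalIdeal (𝓞 K)⁰ K)
          = (J : FractionalIdeal (𝓞 K)⁰ K)⁻¹ *
            (spanSingleton (𝓞 K)⁰ (2 : K) * spanSingleton (𝓞 K)⁰ κK *
              (I : FractionalIdeal (𝓞 K)⁰ K) ^ 2) := by
        have hcancel : ((J : FractionalIdeal (𝓞 K)⁰ K) * (I : FractionalIdeal (𝓞 K)⁰ K)) ≠ 0 :=
          mul_ne_zero hJF hIF
        apply mul_left_cancel₀ hcancel
        rw [hidF]
        rw [show ((J : FractionalIdeal (𝓞 K)⁰ K) * (I : FractionalIdeal (𝓞 K)⁰ K)) *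
            ((J : FractionalIdeal (𝓞 K)⁰ K)⁻¹ *
              (spanSingleton (𝓞 K)⁰ (2 : K) * spanSingleton (𝓞 K)⁰ κK *
                (I : FractionalIdeal (𝓞 K)⁰ K) ^ 2))
          = ((J : FractionalIdeal (𝓞 K)⁰ K) * (J : FractionalIdeal (𝓞 K)⁰ K)⁻¹) *
            ((I : FractionalIdeal (𝓞 K)⁰ K) *
              (spanSingleton (𝓞 K)⁰ (2 : K) * spanSingleton (𝓞 K)⁰ κK *
                (I : FractionalIdeal (𝓞 K)⁰ K) ^ 2)) from by ring,
          mul_inv_cancel₀ hJF, one_mul]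
        ring
      have c_ne : ((2 : K)⁻¹ * κK⁻¹) ≠ 0 :=
        mul_ne_zero (inv_ne_zero h2K) (inv_ne_zero hκK)
      have hsc1 : ((2 : K)⁻¹ * κK⁻¹) * 2 = κK⁻¹ := by
        rw [mul_right_comm, inv_mul_cancel₀ h2K, one_mul]
      have hsc2 : ((2 : K)⁻¹ * κK⁻¹) * κK = (2 : K)⁻¹ := by
        rw [mul_assoc, inv_mul_cancel₀ hκK, mul_one]
      have e1 : spanSingleton (𝓞 K)⁰ (κK⁻¹) * (I : FractionalIdeal (𝓞 K)⁰ K)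
          = spanSingleton (𝓞 K)⁰ ((2 : K)⁻¹ * κK⁻¹) *
            (spanSingleton (𝓞 K)⁰ (2 : K) * (I : FractionalIdeal (𝓞 K)⁰ K)) := by
        rw [← mul_assoc, spanSingleton_mul_spanSingleton, hsc1]
      have e2 : spanSingleton (𝓞 K)⁰ ((2 : K)⁻¹) * ((I ^ 2 : Ideal (𝓞 K)) :
            FractionalIdeal (𝓞 K)⁰ K)
          = spanSingleton (𝓞 K)⁰ ((2 : K)⁻¹ * κK⁻¹) *
            (spanSingleton (𝓞 K)⁰ κK * ((I ^ 2 : Ideal (𝓞 K)) : FractionalIdeal (𝓞 K)⁰ K)) := by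
        rw [← mul_assoc, spanSingleton_mul_spanSingleton, hsc2]
      have e3 : (spanSingleton (𝓞 K)⁰ (2 : K) * (I : FractionalIdeal (𝓞 K)⁰ K)) ⊓
          (spanSingleton (𝓞 K)⁰ κK * ((I ^ 2 : Ideal (𝓞 K)) : FractionalIdeal (𝓞 K)⁰ K))
          = (M : FractionalIdeal (𝓞 K)⁰ K) := by
        rw [hMdef, myCoeIdealInf]
        simp only [coeIdeal_mul, coeIdeal_span_singleton, h2map, ← hκKdef]
      rw [e1, e2, ← mySingMulInf _ c_ne, e3, hMF, coeIdeal_pow]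
      rw [show spanSingleton (𝓞 K)⁰ ((2 : K)⁻¹ * κK⁻¹) *
          ((J : FractionalIdeal (𝓞 K)⁰ K)⁻¹ *
            (spanSingleton (𝓞 K)⁰ (2 : K) * spanSingleton (𝓞 K)⁰ κK *
              (I : FractionalIdeal (𝓞 K)⁰ K) ^ 2))
        = (spanSingleton (𝓞 K)⁰ ((2 : K)⁻¹ * κK⁻¹) *
            (spanSingleton (𝓞 K)⁰ (2 : K) * spanSingleton (𝓞 K)⁰ κK)) *
          ((J : FractionalIdeal (𝓞 K)⁰ K)⁻¹ * (I : FractionalIdeal (𝓞 K)⁰ K) ^ 2) from by ring]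
      rw [spanSingleton_mul_spanSingleton, spanSingleton_mul_spanSingleton]
      rw [show ((2 : K)⁻¹ * κK⁻¹) * ((2 : K) * κK) = ((2 : K)⁻¹ * 2) * (κK⁻¹ * κK) from by ring,
        inv_mul_cancel₀ h2K, inv_mul_cancel₀ hκK, one_mul, spanSingleton_one, one_mul]
  refine ⟨main, fun y hy1 hy2 => ?_⟩
  rw [← main]
  refine myMemInf.mpr ⟨mem_singleton_mul.mpr ⟨κK * y, hy1, ?_⟩,
    mem_singleton_mul.mpr ⟨2 * y, hy2, ?_⟩⟩
  · rw [← mul_assoc, inv_mul_cancel₀ hκK, one_mul]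
  · rw [← mul_assoc, inv_mul_cancel₀ h2K, one_mul]
end

section
/- Let O be an order in a quaternion algebra D over a number field K, closed under the symplectic involution, I an ideal of O_K, and suppose x ∈ O is a root of unity with reduced norm 1, x ≠ 1, lying in the principal congruence subgroup O^1(I) (so x ≡ 1 mod I·O). Then x satisfies x² - (x + x^{-1})x + 1 = 0 with x + x^{-1} ∈ O_K, and the ideal I contains the element x + x^{-1} - 2; that is, I divides the ideal ⟨x + x^{-1} - 2⟩. -/
open Quaternion QuaternionAlgebra NumberField

/-- Let `O` be an order in a quaternion algebra `D = (a,b)_K` over a number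
field `K`, containing `O_K` and closed under the symplectic involution, `I` an ideal of `O_K`,
and suppose `x ∈ O` is a root of unity of reduced norm `1`, `x ≠ 1`, lying in the principal
congruence subgroup `O¹(I)` (i.e. `x ≡ 1 mod I·O`).  Then `x` satisfies
`x² - (x + x⁻¹)·x + 1 = 0` with `x + x⁻¹ ∈ O_K`, and `I` contains `x + x⁻¹ - 2`; that is,
`I` divides the ideal `⟨x + x⁻¹ - 2⟩`. -/
theorem torsion_in_congruence_subgroup_trace_condition
    (K : Type*) [Field K] [NumberField K] (a b : K)
    (O : Subring (ℍ[K, a, b]))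
    (hOK : ∀ r : 𝓞 K, algebraMap K ℍ[K, a, b] (r : K) ∈ O)
    (hfg : (Submodule.span ℤ (O : Set ℍ[K, a, b])).FG)
    (hspan : Submodule.span K (O : Set ℍ[K, a, b]) = ⊤)
    (hstar : ∀ w ∈ O, star w ∈ O)
    (I : Ideal (𝓞 K))
    (x y : ℍ[K, a, b]) (hxO : x ∈ O)
    (hinv : x * y = 1 ∧ y * x = 1)
    (hroot : ∃ n : ℕ, 0 < n ∧ x ^ n = 1)
    (hnorm : x * star x = 1) (hx1 : x ≠ 1)
    (hcong : x - 1 ∈ Submodule.span ℤ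
      {z : ℍ[K, a, b] | ∃ α ∈ I, ∃ w ∈ O, z = algebraMap K ℍ[K, a, b] ((α : 𝓞 K) : K) * w}) :
    ∃ t : 𝓞 K, algebraMap K ℍ[K, a, b] (t : K) = x + y ∧
      x ^ 2 - (x + y) * x + 1 = 0 ∧
      t - 2 ∈ I := by
  let S : Subalgebra ℤ ℍ[K, a, b] := subalgebraOfSubring O
  have hSsub : Subalgebra.toSubmodule S = Submodule.span ℤ (O : Set ℍ[K, a, b]) :=
    (Submodule.span_eq (Subalgebra.toSubmodule S)).symm
  have hint : ∀ w ∈ O, IsIntegral ℤ w := by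
    intro w hw
    exact IsIntegral.of_mem_of_fg S (hSsub ▸ hfg) w hw
  have halg : ∀ k : K, algebraMap K ℍ[K, a, b] k = (k : ℍ[K, a, b]) := fun k => rfl
  have hinj : Function.Injective (algebraMap K ℍ[K, a, b]) :=
    fun k₁ k₂ h => by
      have : (k₁ : ℍ[K, a, b]) = (k₂ : ℍ[K, a, b]) := by rw [← halg, ← halg]; exact h
      exact QuaternionAlgebra.coe_injective this
  -- For each `w ∈ O`, `w + star w` is the image of an element of `𝓞 K`.
  have htr : ∀ w ∈ O, ∃ s : 𝓞 K, algebraMap K ℍ[K, a, b] (s : K) = w + star w := by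
    intro w hw
    have h1 : w + star w = ((2 * w.re : K) : ℍ[K, a, b]) := by rw [QuaternionAlgebra.self_add_star' w, zero_mul, add_zero]
    have h2 : IsIntegral ℤ ((2 * w.re : K) : ℍ[K, a, b]) := by
      rw [← h1]; exact hint _ (O.add_mem hw (hstar w hw))
    have h3 : IsIntegral ℤ (2 * w.re : K) := by
      rw [← isIntegral_algebraMap_iff hinj]
      rwa [halg]
    exact ⟨⟨2 * w.re, h3⟩, by rw [halg]; exact h1.symm⟩
  -- `y = star x`.
  have hy : y = star x := by
    calc y = y * (x * star x) := by rw [hnorm, mul_one]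
    _ = (y * x) * star x := by rw [mul_assoc]
    _ = star x := by rw [hinv.2, one_mul]
  -- Key: the "trace" of anything in the congruence module lies in `I`.
  have key : ∀ z ∈ Submodule.span ℤ
      {z : ℍ[K, a, b] | ∃ α ∈ I, ∃ w ∈ O, z = algebraMap K ℍ[K, a, b] ((α : 𝓞 K) : K) * w},
      ∃ s ∈ I, algebraMap K ℍ[K, a, b] (s : K) = z + star z := by
    intro z hz
    induction hz using Submodule.span_induction with
    | mem z hz =>
      obtain ⟨α, hα, w, hw, rfl⟩ := hz
      obtain ⟨s, hs⟩ := htr w hw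
      refine ⟨α * s, I.mul_mem_right s hα, ?_⟩
      have hstarc : star (algebraMap K ℍ[K, a, b] ((α : 𝓞 K) : K) * w)
          = algebraMap K ℍ[K, a, b] ((α : 𝓞 K) : K) * star w := by
        rw [star_mul, halg, QuaternionAlgebra.star_coe, ← halg]
        exact (Algebra.commutes _ _).symm
      rw [hstarc, ← mul_add, ← hs, ← map_mul]
      push_cast
      ring_nf
    | zero => exact ⟨0, I.zero_mem, by simp⟩
    | add z₁ z₂ _ _ h1 h2 =>
      obtain ⟨s₁, hs₁, e₁⟩ := h1
      obtain ⟨s₂, hs₂, e₂⟩ := h2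
      exact ⟨s₁ + s₂, I.add_mem hs₁ hs₂, by rw [star_add]; push_cast [map_add, e₁, e₂]; abel⟩
    | smul n z _ h =>
      obtain ⟨s, hs, e⟩ := h
      refine ⟨n • s, by simpa using I.toAddSubgroup.zsmul_mem hs n, ?_⟩
      rw [star_zsmul, ← smul_add, ← e,
        show ((n • s : 𝓞 K) : K) = n • (s : K) from map_zsmul (algebraMap (𝓞 K) K) n s,
        map_zsmul]
  obtain ⟨s, hsI, hs⟩ := key (x - 1) hcong
  refine ⟨s + 2, ?_, ?_, by simpa using hsI⟩
  · have : (x - 1) + star (x - 1) = x + star x - 2 := by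
      rw [star_sub, star_one, show (2:ℍ[K,a,b]) = 1 + 1 from by norm_num]; abel
    rw [this] at hs
    rw [halg] at hs
    rw [hy, halg]
    have h2 : ((2 : 𝓞 K) : K) = 2 := rfl
    have h2' : ((2 : K) : ℍ[K, a, b]) = 2 := by
      rw [show (2:K) = 1 + 1 from by norm_num, QuaternionAlgebra.coe_add,
        QuaternionAlgebra.coe_one, show (2:ℍ[K, a, b]) = 1 + 1 from by norm_num]
    push_cast [h2, h2'] at hs ⊢
    rw [hs]
    noncomm_ring
  · have h1 : (x + y) * x = x * x + 1 := by rw [add_mul, hinv.2]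
    rw [h1, ← sq]; noncomm_ring
end

section
/- Let O be an order in a quaternion algebra D over a number field K, closed under the symplectic involution, and let i₀ ∈ O_K be nonzero. If x ∈ O is a root of unity of reduced norm 1 with x ≡ 1 (mod i₀ O), i.e. x = 1 + i₀ a for some a ∈ O, then i₀² divides (x + x^{-1}) - 2 in O_K. -/
open Quaternion QuaternionAlgebra NumberField

/-- Let `O` be an order in a quaternion algebra `D = (a,b)_K` over a number
field `K`, containing `O_K` and closed under the symplectic involution, and `i₀ ∈ O_K` nonzero.
If `x ∈ O` is a root of unity of reduced norm `1` with `x ≡ 1 (mod i₀·O)`, i.e.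
`x = 1 + i₀·a` for some `a ∈ O`, then `i₀²` divides `(x + x⁻¹) - 2` in `O_K`. -/
theorem torsion_principal_ideal_square_divides
    (K : Type*) [Field K] [NumberField K] (a b : K)
    (O : Subring (ℍ[K, a, b]))
    (hOK : ∀ r : 𝓞 K, algebraMap K ℍ[K, a, b] (r : K) ∈ O)
    (hfg : (Submodule.span ℤ (O : Set ℍ[K, a, b])).FG)
    (hspan : Submodule.span K (O : Set ℍ[K, a, b]) = ⊤)
    (hstar : ∀ w ∈ O, star w ∈ O)
    (i₀ : 𝓞 K) (hi₀ : i₀ ≠ 0)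
    (x y : ℍ[K, a, b]) (hxO : x ∈ O)
    (hinv : x * y = 1 ∧ y * x = 1)
    (hroot : ∃ n : ℕ, 0 < n ∧ x ^ n = 1)
    (hnorm : x * star x = 1)
    (hcong : ∃ w ∈ O, x = 1 + algebraMap K ℍ[K, a, b] (i₀ : K) * w) :
    ∃ t : 𝓞 K, algebraMap K ℍ[K, a, b] (t : K) = x + y ∧ i₀ ^ 2 ∣ (t - 2) := by
  obtain ⟨w, hwO, hx⟩ := hcong
  have hi₀K : (i₀ : K) ≠ 0 := fun h => hi₀ (RingOfIntegers.coe_eq_zero_iff.mp h)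
  -- y = star x
  have hy : y = star x := by
    calc y = y * (x * star x) := by rw [hnorm, mul_one]
    _ = (y * x) * star x := by rw [mul_assoc]
    _ = star x := by rw [hinv.2, one_mul]
  set α : ℍ[K, a, b] := algebraMap K ℍ[K, a, b] (i₀ : K) with hα
  have hαcoe : α = ((i₀ : K) : ℍ[K, a, b]) := rfl
  have hcomm : w * α = α * w := by
    rw [hαcoe, QuaternionAlgebra.coe_commutes]
  have hsx : star x = 1 + α * star w := by
    rw [hx, hαcoe, star_add, star_one, star_mul, QuaternionAlgebra.star_coe,
      ← QuaternionAlgebra.coe_commutes]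
  -- the key identity coming from reduced norm 1
  have h4 : (α * w) * (α * star w) = α * α * (w * star w) := by
    rw [mul_assoc α w (α * star w), ← mul_assoc w α (star w), hcomm]
    noncomm_ring
  have hE : α * (w + star w) + α * α * (w * star w) = 0 := by
    have key : (1 + α * w) * (1 + α * star w)
        = 1 + (α * (w + star w) + α * α * (w * star w)) := by
      rw [← h4]; noncomm_ring
    have h5 := hnorm
    rw [hsx, hx, key] at h5
    exact add_eq_left.mp h5
  -- w * star w is a scalar
  set cK : K := -((2 * w.re) / (i₀ : K)) with hcK
  have hws : w + star w = ((2 * w.re : K) : ℍ[K, a, b]) :=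
    (QuaternionAlgebra.self_add_star' w).trans (by rw [zero_mul, add_zero])
  have hαu : IsUnit α := by
    refine ⟨⟨α, (((i₀ : K)⁻¹ : K) : ℍ[K, a, b]), ?_, ?_⟩, rfl⟩
    · rw [hαcoe, ← QuaternionAlgebra.coe_mul, mul_inv_cancel₀ hi₀K, QuaternionAlgebra.coe_one]
    · rw [hαcoe, ← QuaternionAlgebra.coe_mul, inv_mul_cancel₀ hi₀K, QuaternionAlgebra.coe_one]
  have hccK : ((i₀ : K) * (i₀ : K)) * cK = -((i₀ : K) * (2 * w.re)) := by
    rw [hcK]; field_simp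
  have hcc : w * star w = (cK : ℍ[K, a, b]) := by
    refine (hαu.mul hαu).mul_left_cancel ?_
    have h1 : α * α * (w * star w) = -(α * (w + star w)) :=
      eq_neg_of_add_eq_zero_left (by rw [add_comm]; exact hE)
    rw [h1, hws, hαcoe, ← QuaternionAlgebra.coe_mul, ← QuaternionAlgebra.coe_mul,
      ← QuaternionAlgebra.coe_mul, ← QuaternionAlgebra.coe_neg]
    exact congrArg _ hccK.symm
  -- cK is an algebraic integer
  have hint : IsIntegral ℤ cK := by
    have hmem : ((cK : K) : ℍ[K, a, b]) ∈ O := by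
      rw [← hcc]; exact O.mul_mem hwO (hstar w hwO)
    have hOint : IsIntegral ℤ ((cK : K) : ℍ[K, a, b]) := by
      refine IsIntegral.of_mem_of_fg (subalgebraOfSubring O) ?_ _ hmem
      have hsub : Subalgebra.toSubmodule (subalgebraOfSubring O) =
          Submodule.span ℤ (O : Set ℍ[K, a, b]) := by
        refine le_antisymm (fun z hz => Submodule.subset_span hz) (Submodule.span_le.2 ?_)
        intro z hz; exact hz
      rw [hsub]; exact hfg
    have hco : ((cK : K) : ℍ[K, a, b]) = algebraMap K ℍ[K, a, b] cK := rfl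
    rw [hco] at hOint
    exact (isIntegral_algebraMap_iff (algebraMap K ℍ[K, a, b]).injective).mp hOint
  set n : 𝓞 K := ⟨cK, hint⟩ with hn
  refine ⟨2 - i₀ ^ 2 * n, ?_, ⟨-n, by ring⟩⟩
  -- compute x + y
  have h3 : α * (w + star w) = -(α * α * (cK : ℍ[K, a, b])) := by
    rw [← hcc]
    exact eq_neg_of_add_eq_zero_left hE
  have hxy : x + y = ((2 - (i₀ : K) ^ 2 * cK : K) : ℍ[K, a, b]) := by
    rw [hy, hsx, hx]
    have step : (1 + α * w) + (1 + α * star w) = 2 + α * (w + star w) := by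
      rw [mul_add, show (2 : ℍ[K, a, b]) = 1 + 1 from one_add_one_eq_two.symm]
      abel
    rw [step, h3, hαcoe, ← QuaternionAlgebra.coe_mul, ← QuaternionAlgebra.coe_mul,
      ← QuaternionAlgebra.coe_neg]
    have : (2 : ℍ[K, a, b]) = ((2 : K) : ℍ[K, a, b]) := by
      rw [show (2 : K) = 1 + 1 from one_add_one_eq_two.symm, QuaternionAlgebra.coe_add,
        QuaternionAlgebra.coe_one, one_add_one_eq_two]
    rw [this, ← QuaternionAlgebra.coe_add]
    congr 1
    ring
  have ht : ((2 - i₀ ^ 2 * n : 𝓞 K) : K) = 2 - (i₀ : K) ^ 2 * cK := by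
    push_cast
    rfl
  rw [show (algebraMap K ℍ[K, a, b]) ((2 - i₀ ^ 2 * n : 𝓞 K) : K)
      = ((((2 - i₀ ^ 2 * n : 𝓞 K) : K)) : ℍ[K, a, b]) from rfl, ht, hxy]
end
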